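/- If x, y, z are nonzero Eisenstein integers, then x³ + y³ + z³ ≠ 0. -/

import Mathlib

open NumberField IsCyclotomicExtension.Rat.Three FermatLastTheoremForThreeGen

section eisenstein

open NumberField IsCyclotomicExtension.Rat.Three

variable {K : Type*} [Field K]
variable {ζ : K} (hζ : IsPrimitiveRoot ζ 3)


/-- `FermatLastTheoremForThreeGen` is the statement that `a ^ 3 + b ^ 3 = u * c ^ 3` has no
nontrivial solutions in `𝓞 K` for all `u : (𝓞 K)ˣ` such that `¬ (hζ.toInteger - 1) ∣ a`, `¬ (hζ.toInteger - 1) ∣ b` and `(hζ.toInteger - 1) ∣ c`.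
The reason to consider `FermatLastTheoremForThreeGen` is to make a descent argument working. -/
def FermatLastTheoremForThreeGen : Prop :=
  ∀ a b c : 𝓞 K, ∀ u : (𝓞 K)ˣ, c ≠ 0 → ¬ (hζ.toInteger - 1) ∣ a → ¬ (hζ.toInteger - 1) ∣ b → (hζ.toInteger - 1) ∣ c → IsCoprime a b →
    a ^ 3 + b ^ 3 ≠ u * c ^ 3

namespace FermatLastTheoremForThreeGen

/-- `Solution'` is a tuple given by a solution to `a ^ 3 + b ^ 3 = u * c ^ 3`,
where `a`, `b`, `c` and `u` are as in `FermatLastTheoremForThreeGen`.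
See `Solution` for the actual structure on which we will do the descent. -/
structure Solution' where
  a : 𝓞 K
  b : 𝓞 K
  c : 𝓞 K
  u : (𝓞 K)ˣ
  ha : ¬ (hζ.toInteger - 1) ∣ a
  hb : ¬ (hζ.toInteger - 1) ∣ b
  hc : c ≠ 0
  coprime : IsCoprime a b
  hcdvd : (hζ.toInteger - 1) ∣ c
  H : a ^ 3 + b ^ 3 = u * c ^ 3

/-- `Solution` is the same as `Solution'` with the additional assumption that `(hζ.toInteger - 1) ^ 2 ∣ a + b`. -/
structure Solution extends Solution' hζ where
  hab : (hζ.toInteger - 1) ^ 2 ∣ a + b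

variable {hζ}
variable (S : Solution hζ) (S' : Solution' hζ)

section IsCyclotomicExtension

variable [NumberField K] [IsCyclotomicExtension {3} ℚ K]

/-- For any `S' : Solution'`, the multiplicity of `(hζ.toInteger - 1)` in `S'.c` is finite. -/
lemma Solution'.multiplicity_lambda_c_finite :
    FiniteMultiplicity (hζ.toInteger - 1) S'.c :=
  .of_not_isUnit hζ.zeta_sub_one_prime'.not_isUnit S'.hc

/-- Given `S' : Solution'`, `S'.multiplicity` is the multiplicity of `(hζ.toInteger - 1)` in `S'.c`, as a natural
number. -/
noncomputable def Solution'.multiplicity :=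
  _root_.multiplicity (hζ.toInteger - 1) S'.c

/-- Given `S : Solution`, `S.multiplicity` is the multiplicity of `(hζ.toInteger - 1)` in `S.c`, as a natural
number. -/
noncomputable def Solution.multiplicity := S.toSolution'.multiplicity

/-- We say that `S : Solution` is minimal if for all `S₁ : Solution`, the multiplicity of `(hζ.toInteger - 1)` in
`S.c` is less or equal than the multiplicity in `S₁.c`. -/
def Solution.isMinimal : Prop := ∀ (S₁ : Solution hζ), S.multiplicity ≤ S₁.multiplicity

omit [NumberField K] [IsCyclotomicExtension {3} ℚ K] in
include S in
/-- If there is a solution then there is a minimal one. -/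
lemma Solution.exists_minimal : ∃ (S₁ : Solution hζ), S₁.isMinimal := by
  classical
  let T := {n | ∃ (S' : Solution hζ), S'.multiplicity = n}
  rcases Nat.find_spec (⟨S.multiplicity, ⟨S, rfl⟩⟩ : T.Nonempty) with ⟨S₁, hS₁⟩
  exact ⟨S₁, fun S'' ↦ hS₁ ▸ Nat.find_min' _ ⟨S'', rfl⟩⟩

/-- Given `S' : Solution'`, then `S'.a` and `S'.b` are both congruent to `1` modulo `(hζ.toInteger - 1) ^ 4` or are
both congruent to `-1`. -/
lemma a_cube_b_cube_congr_one_or_neg_one :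
    (hζ.toInteger - 1) ^ 4 ∣ S'.a ^ 3 - 1 ∧ (hζ.toInteger - 1) ^ 4 ∣ S'.b ^ 3 + 1 ∨ (hζ.toInteger - 1) ^ 4 ∣ S'.a ^ 3 + 1 ∧ (hζ.toInteger - 1) ^ 4 ∣ S'.b ^ 3 - 1 := by
  obtain ⟨z, hz⟩ := S'.hcdvd
  rcases lambda_pow_four_dvd_cube_sub_one_or_add_one_of_lambda_not_dvd hζ S'.ha with
    ⟨x, hx⟩ | ⟨x, hx⟩ <;>
  rcases lambda_pow_four_dvd_cube_sub_one_or_add_one_of_lambda_not_dvd hζ S'.hb with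
    ⟨y, hy⟩ | ⟨y, hy⟩
  · exfalso
    replace hζ : IsPrimitiveRoot ζ (3 ^ 1) := by rwa [pow_one]
    refine hζ.toInteger_sub_one_not_dvd_two (by decide) ⟨S'.u * (hζ.toInteger - 1) ^ 2 * z ^ 3 - (hζ.toInteger - 1) ^ 3 * (x + y), ?_⟩
    symm
    calc _ = S'.u * ((hζ.toInteger - 1) * z) ^ 3 - (hζ.toInteger - 1) ^ 4 * x - (hζ.toInteger - 1) ^ 4 * y := by ring
    _ = (S'.a ^ 3 + S'.b ^ 3) - (S'.a ^ 3 - 1) - (S'.b ^ 3 - 1) := by rw [← hx, ← hy, ← hz, ← S'.H]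
    _ = 2 := by ring
  · left
    exact ⟨⟨x, hx⟩, ⟨y, hy⟩⟩
  · right
    exact ⟨⟨x, hx⟩, ⟨y, hy⟩⟩
  · exfalso
    replace hζ : IsPrimitiveRoot ζ (3 ^ 1) := by rwa [pow_one]
    refine hζ.toInteger_sub_one_not_dvd_two (by decide) ⟨(hζ.toInteger - 1) ^ 3 * (x + y) - S'.u * (hζ.toInteger - 1) ^ 2 * z ^ 3, ?_⟩
    symm
    calc _ = (hζ.toInteger - 1) ^ 4 * x + (hζ.toInteger - 1) ^ 4 * y - S'.u * ((hζ.toInteger - 1) * z) ^ 3 := by ring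
    _ = (S'.a ^ 3 + 1) + (S'.b ^ 3 + 1) - (S'.a ^ 3 + S'.b ^ 3) := by rw [← hx, ← hy, ← hz, ← S'.H]
    _ = 2 := by ring

/-- Given `S' : Solution'`, we have that `(hζ.toInteger - 1) ^ 4` divides `S'.c ^ 3`. -/
lemma lambda_pow_four_dvd_c_cube : (hζ.toInteger - 1) ^ 4 ∣ S'.c ^ 3 := by
  rcases a_cube_b_cube_congr_one_or_neg_one S' with
    ⟨⟨x, hx⟩, ⟨y, hy⟩⟩ | ⟨⟨x, hx⟩, ⟨y, hy⟩⟩ <;>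
  · refine ⟨S'.u⁻¹ * (x + y), ?_⟩
    symm
    calc _ = S'.u⁻¹ * ((hζ.toInteger - 1) ^ 4 * x + (hζ.toInteger - 1) ^ 4 * y) := by ring
    _ = S'.u⁻¹ * (S'.a ^ 3 + S'.b ^ 3) := by rw [← hx, ← hy]; ring
    _ = S'.u⁻¹ * (S'.u * S'.c ^ 3) := by rw [S'.H]
    _ = S'.c ^ 3 := by simp

/-- Given `S' : Solution'`, we have that `(hζ.toInteger - 1) ^ 2` divides `S'.c`. -/
lemma lambda_sq_dvd_c : (hζ.toInteger - 1) ^ 2 ∣ S'.c := by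
  have hm := S'.multiplicity_lambda_c_finite
  have := lambda_pow_four_dvd_c_cube S'
  rw [pow_dvd_iff_le_emultiplicity, emultiplicity_pow hζ.zeta_sub_one_prime',
    hm.emultiplicity_eq_multiplicity] at this
  norm_cast at this
  exact (FiniteMultiplicity.pow_dvd_iff_le_multiplicity hm).mpr (by lia)

/-- Given `S' : Solution'`, we have that `2 ≤ S'.multiplicity`. -/
lemma Solution'.two_le_multiplicity : 2 ≤ S'.multiplicity := by
  simpa [Solution'.multiplicity] using
    S'.multiplicity_lambda_c_finite.le_multiplicity_of_pow_dvd (lambda_sq_dvd_c S')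

/-- Given `S : Solution`, we have that `2 ≤ S.multiplicity`. -/
lemma Solution.two_le_multiplicity : 2 ≤ S.multiplicity :=
  S.toSolution'.two_le_multiplicity

end IsCyclotomicExtension

-- This is just a computation and the formulas are too long.
set_option linter.style.whitespace false in
/-- Given `S' : Solution'`, the key factorization of `S'.a ^ 3 + S'.b ^ 3`. -/
lemma a_cube_add_b_cube_eq_mul :
    S'.a ^ 3 + S'.b ^ 3 = (S'.a + S'.b) * (S'.a + (IsPrimitiveRoot.isUnit (hζ.toInteger_isPrimitiveRoot) (by decide)).unit * S'.b) * (S'.a + (IsPrimitiveRoot.isUnit (hζ.toInteger_isPrimitiveRoot) (by decide)).unit ^ 2 * S'.b) := by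
  symm
  calc _ = S'.a^3+S'.a^2*S'.b*((IsPrimitiveRoot.isUnit (hζ.toInteger_isPrimitiveRoot) (by decide)).unit^2+(IsPrimitiveRoot.isUnit (hζ.toInteger_isPrimitiveRoot) (by decide)).unit+1)+S'.a*S'.b^2*((IsPrimitiveRoot.isUnit (hζ.toInteger_isPrimitiveRoot) (by decide)).unit^2+(IsPrimitiveRoot.isUnit (hζ.toInteger_isPrimitiveRoot) (by decide)).unit+(IsPrimitiveRoot.isUnit (hζ.toInteger_isPrimitiveRoot) (by decide)).unit^3)+(IsPrimitiveRoot.isUnit (hζ.toInteger_isPrimitiveRoot) (by decide)).unit^3*S'.b^3 := by ring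
  _ = S'.a^3+S'.a^2*S'.b*((IsPrimitiveRoot.isUnit (hζ.toInteger_isPrimitiveRoot) (by decide)).unit^2+(IsPrimitiveRoot.isUnit (hζ.toInteger_isPrimitiveRoot) (by decide)).unit+1)+S'.a*S'.b^2*((IsPrimitiveRoot.isUnit (hζ.toInteger_isPrimitiveRoot) (by decide)).unit^2+(IsPrimitiveRoot.isUnit (hζ.toInteger_isPrimitiveRoot) (by decide)).unit+1)+S'.b^3 := by
    simp [hζ.toInteger_cube_eq_one]
  _ = S'.a ^ 3 + S'.b ^ 3 := by rw [eta_sq]; ring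

section IsCyclotomicExtension
variable [NumberField K] [IsCyclotomicExtension {3} ℚ K]

/-- Given `S' : Solution'`, we have that `(hζ.toInteger - 1) ^ 2` divides one amongst `S'.a + S'.b`,
`S'.a + (IsPrimitiveRoot.isUnit (hζ.toInteger_isPrimitiveRoot) (by decide)).unit * S'.b` and `S'.a + (IsPrimitiveRoot.isUnit (hζ.toInteger_isPrimitiveRoot) (by decide)).unit ^ 2 * S'.b`. -/
lemma lambda_sq_dvd_or_dvd_or_dvd :
    (hζ.toInteger - 1) ^ 2 ∣ S'.a + S'.b ∨ (hζ.toInteger - 1) ^ 2 ∣ S'.a + (IsPrimitiveRoot.isUnit (hζ.toInteger_isPrimitiveRoot) (by decide)).unit * S'.b ∨ (hζ.toInteger - 1) ^ 2 ∣ S'.a + (IsPrimitiveRoot.isUnit (hζ.toInteger_isPrimitiveRoot) (by decide)).unit ^ 2 * S'.b := by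
  by_contra! ⟨h1, h2, h3⟩
  rw [← emultiplicity_lt_iff_not_dvd] at h1 h2 h3
  have h1' : FiniteMultiplicity (hζ.toInteger - 1) (S'.a + S'.b) :=
    finiteMultiplicity_iff_emultiplicity_ne_top.2 (fun ht ↦ by simp [ht] at h1)
  have h2' : FiniteMultiplicity (hζ.toInteger - 1) (S'.a + (IsPrimitiveRoot.isUnit (hζ.toInteger_isPrimitiveRoot) (by decide)).unit * S'.b) := by
    refine finiteMultiplicity_iff_emultiplicity_ne_top.2 (fun ht ↦ ?_)
    rw [coe_eta] at ht
    simp [ht] at h2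
  have h3' : FiniteMultiplicity (hζ.toInteger - 1) (S'.a + (IsPrimitiveRoot.isUnit (hζ.toInteger_isPrimitiveRoot) (by decide)).unit ^ 2 * S'.b) := by
    refine finiteMultiplicity_iff_emultiplicity_ne_top.2 (fun ht ↦ ?_)
    rw [coe_eta] at ht
    simp [ht] at h3
  rw [h1'.emultiplicity_eq_multiplicity, Nat.cast_lt] at h1
  rw [h2'.emultiplicity_eq_multiplicity, Nat.cast_lt] at h2
  rw [h3'.emultiplicity_eq_multiplicity, Nat.cast_lt] at h3
  have := (pow_dvd_pow_of_dvd (lambda_sq_dvd_c S') 3).mul_left S'.u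
  rw [← pow_mul, ← S'.H, a_cube_add_b_cube_eq_mul, pow_dvd_iff_le_emultiplicity,
    emultiplicity_mul hζ.zeta_sub_one_prime', emultiplicity_mul hζ.zeta_sub_one_prime',
      h1'.emultiplicity_eq_multiplicity, h2'.emultiplicity_eq_multiplicity,
      h3'.emultiplicity_eq_multiplicity, ← Nat.cast_add, ← Nat.cast_add, Nat.cast_le] at this
  lia

open Units in
/-- Given `S' : Solution'`, we may assume that `(hζ.toInteger - 1) ^ 2` divides `S'.a + S'.b ∨ (hζ.toInteger - 1) ^ 2` (see also the
result below). -/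
lemma ex_cube_add_cube_eq_and_isCoprime_and_not_dvd_and_dvd :
    ∃ (a' b' : 𝓞 K), a' ^ 3 + b' ^ 3 = S'.u * S'.c ^ 3 ∧ IsCoprime a' b' ∧ ¬ (hζ.toInteger - 1) ∣ a' ∧
      ¬ (hζ.toInteger - 1) ∣ b' ∧ (hζ.toInteger - 1) ^ 2 ∣ a' + b' := by
  rcases lambda_sq_dvd_or_dvd_or_dvd S' with h | h | h
  · exact ⟨S'.a, S'.b, S'.H, S'.coprime, S'.ha, S'.hb, h⟩
  · refine ⟨S'.a, (IsPrimitiveRoot.isUnit (hζ.toInteger_isPrimitiveRoot) (by decide)).unit * S'.b, ?_, ?_, S'.ha, fun ⟨x, hx⟩ ↦ S'.hb ⟨(IsPrimitiveRoot.isUnit (hζ.toInteger_isPrimitiveRoot) (by decide)).unit ^ 2 * x, ?_⟩, h⟩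
    · simp [mul_pow, hζ.toInteger_cube_eq_one, one_mul, S'.H]
    · refine (isCoprime_mul_unit_left_right (Units.isUnit (IsPrimitiveRoot.isUnit (hζ.toInteger_isPrimitiveRoot) (by decide)).unit) _ _).2 S'.coprime
    · rw [mul_comm _ x, ← mul_assoc, ← hx, mul_comm _ S'.b, mul_assoc, ← pow_succ', coe_eta,
        hζ.toInteger_cube_eq_one, mul_one]
  · refine ⟨S'.a, (IsPrimitiveRoot.isUnit (hζ.toInteger_isPrimitiveRoot) (by decide)).unit ^ 2 * S'.b, ?_, ?_, S'.ha, fun ⟨x, hx⟩ ↦ S'.hb ⟨(IsPrimitiveRoot.isUnit (hζ.toInteger_isPrimitiveRoot) (by decide)).unit * x, ?_⟩, h⟩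
    · rw [mul_pow, ← pow_mul, mul_comm 2, pow_mul, coe_eta, hζ.toInteger_cube_eq_one, one_pow,
        one_mul, S'.H]
    · exact (isCoprime_mul_unit_left_right ((Units.isUnit (IsPrimitiveRoot.isUnit (hζ.toInteger_isPrimitiveRoot) (by decide)).unit).pow _) _ _).2 S'.coprime
    · rw [mul_comm _ x, ← mul_assoc, ← hx, mul_comm _ S'.b, mul_assoc, ← pow_succ, coe_eta,
        hζ.toInteger_cube_eq_one, mul_one]

/-- Given `S' : Solution'`, then there is `S₁ : Solution` such that
`S₁.multiplicity = S'.multiplicity`. -/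
lemma exists_Solution_of_Solution' : ∃ (S₁ : Solution hζ), S₁.multiplicity = S'.multiplicity := by
  obtain ⟨a, b, H, coprime, ha, hb, hab⟩ := ex_cube_add_cube_eq_and_isCoprime_and_not_dvd_and_dvd S'
  exact ⟨
  { a := a
    b := b
    c := S'.c
    u := S'.u
    ha := ha
    hb := hb
    hc := S'.hc
    coprime := coprime
    hcdvd := S'.hcdvd
    H := H
    hab := hab }, rfl⟩

end IsCyclotomicExtension

namespace Solution

lemma a_add_eta_mul_b : S.a + (IsPrimitiveRoot.isUnit (hζ.toInteger_isPrimitiveRoot) (by decide)).unit * S.b = (S.a + S.b) + (hζ.toInteger - 1) * S.b := by rw [coe_eta]; ring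

/-- Given `(S : Solution)`, we have that `(hζ.toInteger - 1) ∣ (S.a + (IsPrimitiveRoot.isUnit (hζ.toInteger_isPrimitiveRoot) (by decide)).unit * S.b)`. -/
lemma lambda_dvd_a_add_eta_mul_b : (hζ.toInteger - 1) ∣ (S.a + (IsPrimitiveRoot.isUnit (hζ.toInteger_isPrimitiveRoot) (by decide)).unit * S.b) :=
  a_add_eta_mul_b S ▸ dvd_add (dvd_trans (dvd_pow_self _ (by decide)) S.hab) ⟨S.b, by rw [mul_comm]⟩

/-- Given `(S : Solution)`, we have that `(hζ.toInteger - 1) ∣ (S.a + (IsPrimitiveRoot.isUnit (hζ.toInteger_isPrimitiveRoot) (by decide)).unit ^ 2 * S.b)`. -/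
lemma lambda_dvd_a_add_eta_sq_mul_b : (hζ.toInteger - 1) ∣ (S.a + (IsPrimitiveRoot.isUnit (hζ.toInteger_isPrimitiveRoot) (by decide)).unit ^ 2 * S.b) := by
  rw [show S.a + (IsPrimitiveRoot.isUnit (hζ.toInteger_isPrimitiveRoot) (by decide)).unit ^ 2 * S.b = (S.a + S.b) + (hζ.toInteger - 1) ^ 2 * S.b + 2 * (hζ.toInteger - 1) * S.b by rw [coe_eta]; ring]
  exact dvd_add (dvd_add (dvd_trans (dvd_pow_self _ (by decide)) S.hab) ⟨(hζ.toInteger - 1) * S.b, by ring⟩)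
    ⟨2 * S.b, by ring⟩

section IsCyclotomicExtension

variable [NumberField K] [IsCyclotomicExtension {3} ℚ K]

/-- Given `(S : Solution)`, we have that `(hζ.toInteger - 1) ^ 2` does not divide `S.a + (IsPrimitiveRoot.isUnit (hζ.toInteger_isPrimitiveRoot) (by decide)).unit * S.b`. -/
lemma lambda_sq_not_dvd_a_add_eta_mul_b : ¬ (hζ.toInteger - 1) ^ 2 ∣ (S.a + (IsPrimitiveRoot.isUnit (hζ.toInteger_isPrimitiveRoot) (by decide)).unit * S.b) := by
  simp_rw [a_add_eta_mul_b, dvd_add_right S.hab, pow_two, mul_dvd_mul_iff_left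
    hζ.zeta_sub_one_prime'.ne_zero, S.hb, not_false_eq_true]

/-- Given `(S : Solution)`, we have that `(hζ.toInteger - 1) ^ 2` does not divide `S.a + (IsPrimitiveRoot.isUnit (hζ.toInteger_isPrimitiveRoot) (by decide)).unit ^ 2 * S.b`. -/
lemma lambda_sq_not_dvd_a_add_eta_sq_mul_b : ¬ (hζ.toInteger - 1) ^ 2 ∣ (S.a + (IsPrimitiveRoot.isUnit (hζ.toInteger_isPrimitiveRoot) (by decide)).unit ^ 2 * S.b) := by
  intro ⟨k, hk⟩
  rcases S.hab with ⟨k', hk'⟩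
  refine S.hb ⟨(k - k') * (-(IsPrimitiveRoot.isUnit (hζ.toInteger_isPrimitiveRoot) (by decide)).unit), ?_⟩
  rw [show S.a + (IsPrimitiveRoot.isUnit (hζ.toInteger_isPrimitiveRoot) (by decide)).unit ^ 2 * S.b = S.a + S.b - S.b + (IsPrimitiveRoot.isUnit (hζ.toInteger_isPrimitiveRoot) (by decide)).unit ^ 2 * S.b by ring, hk',
    show (hζ.toInteger - 1) ^ 2 * k' - S.b + (IsPrimitiveRoot.isUnit (hζ.toInteger_isPrimitiveRoot) (by decide)).unit ^ 2 * S.b = (hζ.toInteger - 1) * (S.b * ((IsPrimitiveRoot.isUnit (hζ.toInteger_isPrimitiveRoot) (by decide)).unit + 1) + (hζ.toInteger - 1) * k') by rw [coe_eta]; ring,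
    pow_two, mul_assoc] at hk
  simp only [mul_eq_mul_left_iff, hζ.zeta_sub_one_prime'.ne_zero, or_false] at hk
  apply_fun (· * -↑(IsPrimitiveRoot.isUnit (hζ.toInteger_isPrimitiveRoot) (by decide)).unit) at hk
  rw [show (S.b * ((IsPrimitiveRoot.isUnit (hζ.toInteger_isPrimitiveRoot) (by decide)).unit + 1) + (hζ.toInteger - 1) * k') * -(IsPrimitiveRoot.isUnit (hζ.toInteger_isPrimitiveRoot) (by decide)).unit = (-S.b) * ((IsPrimitiveRoot.isUnit (hζ.toInteger_isPrimitiveRoot) (by decide)).unit ^ 2 + (IsPrimitiveRoot.isUnit (hζ.toInteger_isPrimitiveRoot) (by decide)).unit + 1 - 1) - (IsPrimitiveRoot.isUnit (hζ.toInteger_isPrimitiveRoot) (by decide)).unit * (hζ.toInteger - 1) * k' by ring,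
    eta_sq, show -S.b * (-↑(IsPrimitiveRoot.isUnit (hζ.toInteger_isPrimitiveRoot) (by decide)).unit - 1 + ↑(IsPrimitiveRoot.isUnit (hζ.toInteger_isPrimitiveRoot) (by decide)).unit + 1 - 1) = S.b by ring, sub_eq_iff_eq_add] at hk
  rw [hk]
  ring

attribute [local instance] IsCyclotomicExtension.Rat.three_pid
attribute [local instance] UniqueFactorizationMonoid.toGCDMonoid

/-- If `p : 𝓞 K` is a prime that divides both `S.a + S.b` and `S.a + (IsPrimitiveRoot.isUnit (hζ.toInteger_isPrimitiveRoot) (by decide)).unit * S.b`, then `p`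
is associated with `(hζ.toInteger - 1)`. -/
lemma associated_of_dvd_a_add_b_of_dvd_a_add_eta_mul_b {p : 𝓞 K} (hp : Prime p)
    (hpab : p ∣ S.a + S.b) (hpaηb : p ∣ S.a + (IsPrimitiveRoot.isUnit (hζ.toInteger_isPrimitiveRoot) (by decide)).unit * S.b) : Associated p (hζ.toInteger - 1) := by
  suffices p_lam : p ∣ (hζ.toInteger - 1) from hp.associated_of_dvd hζ.zeta_sub_one_prime' p_lam
  rw [← one_mul S.a, ← one_mul S.b] at hpab
  rw [← one_mul S.a] at hpaηb
  have := dvd_mul_sub_mul_mul_gcd_of_dvd hpab hpaηb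
  rwa [one_mul, one_mul, coe_eta, IsUnit.dvd_mul_right <| (gcd_isUnit_iff _ _).2 S.coprime] at this

/-- If `p : 𝓞 K` is a prime that divides both `S.a + S.b` and `S.a + (IsPrimitiveRoot.isUnit (hζ.toInteger_isPrimitiveRoot) (by decide)).unit ^ 2 * S.b`, then `p`
is associated with `(hζ.toInteger - 1)`. -/
lemma associated_of_dvd_a_add_b_of_dvd_a_add_eta_sq_mul_b {p : 𝓞 K} (hp : Prime p)
    (hpab : p ∣ (S.a + S.b)) (hpaηsqb : p ∣ (S.a + (IsPrimitiveRoot.isUnit (hζ.toInteger_isPrimitiveRoot) (by decide)).unit ^ 2 * S.b)) : Associated p (hζ.toInteger - 1) := by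
  suffices p_lam : p ∣ (hζ.toInteger - 1) from hp.associated_of_dvd hζ.zeta_sub_one_prime' p_lam
  rw [← one_mul S.a, ← one_mul S.b] at hpab
  rw [← one_mul S.a] at hpaηsqb
  have := dvd_mul_sub_mul_mul_gcd_of_dvd hpab hpaηsqb
  rw [one_mul, mul_one, IsUnit.dvd_mul_right <| (gcd_isUnit_iff _ _).2 S.coprime, ← dvd_neg] at this
  convert! dvd_mul_of_dvd_left this (IsPrimitiveRoot.isUnit (hζ.toInteger_isPrimitiveRoot) (by decide)).unit using 1
  rw [eta_sq, neg_sub, sub_mul, sub_mul, neg_mul, ← pow_two, eta_sq, coe_eta]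
  ring

/-- If `p : 𝓞 K` is a prime that divides both `S.a + (IsPrimitiveRoot.isUnit (hζ.toInteger_isPrimitiveRoot) (by decide)).unit * S.b` and `S.a + (IsPrimitiveRoot.isUnit (hζ.toInteger_isPrimitiveRoot) (by decide)).unit ^ 2 * S.b`, then `p`
is associated with `(hζ.toInteger - 1)`. -/
lemma associated_of_dvd_a_add_eta_mul_b_of_dvd_a_add_eta_sq_mul_b {p : 𝓞 K} (hp : Prime p)
    (hpaηb : p ∣ S.a + (IsPrimitiveRoot.isUnit (hζ.toInteger_isPrimitiveRoot) (by decide)).unit * S.b) (hpaηsqb : p ∣ S.a + (IsPrimitiveRoot.isUnit (hζ.toInteger_isPrimitiveRoot) (by decide)).unit ^ 2 * S.b) : Associated p (hζ.toInteger - 1) := by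
  suffices p_lam : p ∣ (hζ.toInteger - 1) from hp.associated_of_dvd hζ.zeta_sub_one_prime' p_lam
  rw [← one_mul S.a] at hpaηb
  rw [← one_mul S.a] at hpaηsqb
  have := dvd_mul_sub_mul_mul_gcd_of_dvd hpaηb hpaηsqb
  rw [one_mul, mul_one, IsUnit.dvd_mul_right <| (gcd_isUnit_iff _ _).2 S.coprime] at this
  convert! (dvd_mul_of_dvd_left (dvd_mul_of_dvd_left this (IsPrimitiveRoot.isUnit (hζ.toInteger_isPrimitiveRoot) (by decide)).unit) (IsPrimitiveRoot.isUnit (hζ.toInteger_isPrimitiveRoot) (by decide)).unit) using 1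
  symm
  calc _ = (-(IsPrimitiveRoot.isUnit (hζ.toInteger_isPrimitiveRoot) (by decide)).unit.1 - 1 - (IsPrimitiveRoot.isUnit (hζ.toInteger_isPrimitiveRoot) (by decide)).unit) * (-(IsPrimitiveRoot.isUnit (hζ.toInteger_isPrimitiveRoot) (by decide)).unit - 1) := by rw [eta_sq, mul_assoc, ← pow_two, eta_sq]
  _ = 2 * (IsPrimitiveRoot.isUnit (hζ.toInteger_isPrimitiveRoot) (by decide)).unit.1 ^ 2 + 3 * (IsPrimitiveRoot.isUnit (hζ.toInteger_isPrimitiveRoot) (by decide)).unit + 1 := by ring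
  _ = (hζ.toInteger - 1) := by rw [eta_sq, coe_eta]; ring

end IsCyclotomicExtension

/-- Given `S : Solution`, we let `S.y` be any element such that `S.a + (IsPrimitiveRoot.isUnit (hζ.toInteger_isPrimitiveRoot) (by decide)).unit * S.b = (hζ.toInteger - 1) * S.y` -/
noncomputable def y := (lambda_dvd_a_add_eta_mul_b S).choose
lemma y_spec : S.a + (IsPrimitiveRoot.isUnit (hζ.toInteger_isPrimitiveRoot) (by decide)).unit * S.b = (hζ.toInteger - 1) * S.y :=
  (lambda_dvd_a_add_eta_mul_b S).choose_spec

/-- Given `S : Solution`, we let `S.z` be any element such that `S.a + (IsPrimitiveRoot.isUnit (hζ.toInteger_isPrimitiveRoot) (by decide)).unit ^ 2 * S.b = (hζ.toInteger - 1) * S.z` -/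
noncomputable def z := (lambda_dvd_a_add_eta_sq_mul_b S).choose
lemma z_spec : S.a + (IsPrimitiveRoot.isUnit (hζ.toInteger_isPrimitiveRoot) (by decide)).unit ^ 2 * S.b = (hζ.toInteger - 1) * S.z :=
  (lambda_dvd_a_add_eta_sq_mul_b S).choose_spec

variable [NumberField K] [IsCyclotomicExtension {3} ℚ K]

lemma lambda_not_dvd_y : ¬ (hζ.toInteger - 1) ∣ S.y := fun h ↦ by
  replace h := mul_dvd_mul_left (((IsPrimitiveRoot.isUnit (hζ.toInteger_isPrimitiveRoot) (by decide)).unit : 𝓞 K) - 1) h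
  rw [coe_eta, ← y_spec, ← pow_two] at h
  exact lambda_sq_not_dvd_a_add_eta_mul_b _ h

lemma lambda_not_dvd_z : ¬ (hζ.toInteger - 1) ∣ S.z := fun h ↦ by
  replace h := mul_dvd_mul_left (((IsPrimitiveRoot.isUnit (hζ.toInteger_isPrimitiveRoot) (by decide)).unit : 𝓞 K) - 1) h
  rw [coe_eta, ← z_spec, ← pow_two] at h
  exact lambda_sq_not_dvd_a_add_eta_sq_mul_b _ h

/-- We have that `(hζ.toInteger - 1) ^ (3*S.multiplicity-2)` divides `S.a + S.b`. -/
lemma lambda_pow_dvd_a_add_b : (hζ.toInteger - 1) ^ (3 * S.multiplicity - 2) ∣ S.a + S.b := by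
  have h : (hζ.toInteger - 1) ^ S.multiplicity ∣ S.c := pow_multiplicity_dvd _ _
  replace h : ((hζ.toInteger - 1) ^ multiplicity S) ^ 3 ∣ S.u * S.c ^ 3 := by simp [h]
  rw [← S.H, a_cube_add_b_cube_eq_mul, ← pow_mul, mul_comm, y_spec, z_spec] at h
  apply hζ.zeta_sub_one_prime'.pow_dvd_of_dvd_mul_left _ S.lambda_not_dvd_z
  apply hζ.zeta_sub_one_prime'.pow_dvd_of_dvd_mul_left _ S.lambda_not_dvd_y
  have := S.two_le_multiplicity
  rw [show 3 * multiplicity S = 3 * multiplicity S - 2 + 1 + 1 by lia, pow_succ, pow_succ,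
    show (S.a + S.b) * ((hζ.toInteger - 1) * y S) * ((hζ.toInteger - 1) * z S) = (S.a + S.b) * y S * z S * (hζ.toInteger - 1) * (hζ.toInteger - 1) by ring] at h
  simp only [mul_dvd_mul_iff_right hζ.zeta_sub_one_prime'.ne_zero] at h
  rwa [show (S.a + S.b) * y S * z S = y S * (z S * (S.a + S.b)) by ring] at h

/-- Given `S : Solution`, we let `S.x` be any element such that
`S.a + S.b = (hζ.toInteger - 1) ^ (3*S.multiplicity-2) * S.x` -/
noncomputable def x := (lambda_pow_dvd_a_add_b S).choose
lemma x_spec : S.a + S.b = (hζ.toInteger - 1) ^ (3 * S.multiplicity - 2) * S.x :=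
  (lambda_pow_dvd_a_add_b S).choose_spec

/-- Given `S : Solution`, we let `S.w` be any element such that `S.c = (hζ.toInteger - 1) ^ S.multiplicity * S.w` -/
noncomputable def w :=
  (pow_multiplicity_dvd (hζ.toInteger - 1) S.c).choose

omit [NumberField K] [IsCyclotomicExtension {3} ℚ K] in
lemma w_spec : S.c = (hζ.toInteger - 1) ^ S.multiplicity * S.w :=
  (pow_multiplicity_dvd (hζ.toInteger - 1) S.c).choose_spec

lemma lambda_not_dvd_w : ¬ (hζ.toInteger - 1) ∣ S.w := fun h ↦ by
  refine S.toSolution'.multiplicity_lambda_c_finite.not_pow_dvd_of_multiplicity_lt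
    (lt_add_one S.multiplicity) ?_
  rw [pow_succ', mul_comm]
  exact S.w_spec ▸ (mul_dvd_mul_left ((hζ.toInteger - 1) ^ S.multiplicity) h)

lemma lambda_not_dvd_x : ¬ (hζ.toInteger - 1) ∣ S.x := fun h ↦ by
  replace h := mul_dvd_mul_left ((hζ.toInteger - 1) ^ (3 * S.multiplicity - 2)) h
  rw [mul_comm, ← x_spec] at h
  replace h :=
    mul_dvd_mul (mul_dvd_mul h S.lambda_dvd_a_add_eta_mul_b) S.lambda_dvd_a_add_eta_sq_mul_b
  simp only [← a_cube_add_b_cube_eq_mul, S.H, w_spec, Units.isUnit, IsUnit.dvd_mul_left] at h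
  rw [← pow_succ', mul_comm, ← mul_assoc, ← pow_succ'] at h
  have := S.two_le_multiplicity
  rw [show 3 * multiplicity S - 2 + 1 + 1 = 3 * multiplicity S by lia, mul_pow, ← pow_mul,
    mul_comm _ 3, mul_dvd_mul_iff_left _] at h
  · exact lambda_not_dvd_w _ <| hζ.zeta_sub_one_prime'.dvd_of_dvd_pow h
  · simp [hζ.zeta_sub_one_prime'.ne_zero]

attribute [local instance] IsCyclotomicExtension.Rat.three_pid

lemma isCoprime_helper {r s t w : 𝓞 K} (hr : ¬ (hζ.toInteger - 1) ∣ r) (hs : ¬ (hζ.toInteger - 1) ∣ s)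
    (Hp : ∀ {p}, Prime p → p ∣ t → p ∣ w → Associated p (hζ.toInteger - 1)) (H₁ : ∀ {q}, q ∣ r → q ∣ t)
    (H₂ : ∀ {q}, q ∣ s → q ∣ w) : IsCoprime r s := by
  refine isCoprime_of_prime_dvd (not_and.2 (fun _ hz ↦ hs (by simp [hz])))
    (fun p hp p_dvd_r p_dvd_s ↦ hr ?_)
  rwa [← Associated.dvd_iff_dvd_left <| Hp hp (H₁ p_dvd_r) (H₂ p_dvd_s)]

lemma isCoprime_x_y : IsCoprime S.x S.y :=
  isCoprime_helper (lambda_not_dvd_x S) (lambda_not_dvd_y S)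
    (associated_of_dvd_a_add_b_of_dvd_a_add_eta_mul_b S) (fun hq ↦ x_spec S ▸ hq.mul_left _)
      (fun hq ↦ y_spec S ▸ hq.mul_left _)

lemma isCoprime_x_z : IsCoprime S.x S.z :=
  isCoprime_helper (lambda_not_dvd_x S) (lambda_not_dvd_z S)
    (associated_of_dvd_a_add_b_of_dvd_a_add_eta_sq_mul_b S) (fun hq ↦ x_spec S ▸ hq.mul_left _)
      (fun hq ↦ z_spec S ▸ hq.mul_left _)

lemma isCoprime_y_z : IsCoprime S.y S.z :=
  isCoprime_helper (lambda_not_dvd_y S) (lambda_not_dvd_z S)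
    (associated_of_dvd_a_add_eta_mul_b_of_dvd_a_add_eta_sq_mul_b S)
    (fun hq ↦ y_spec S ▸ hq.mul_left _) (fun hq ↦ z_spec S ▸ hq.mul_left _)

lemma x_mul_y_mul_z_eq_u_mul_w_cube : S.x * S.y * S.z = S.u * S.w ^ 3 := by
  suffices hh : (hζ.toInteger - 1) ^ (3 * S.multiplicity - 2) * S.x * (hζ.toInteger - 1) * S.y * (hζ.toInteger - 1) * S.z =
      S.u * (hζ.toInteger - 1) ^ (3 * S.multiplicity) * S.w ^ 3 by
    rw [show (hζ.toInteger - 1) ^ (3 * multiplicity S - 2) * x S * (hζ.toInteger - 1) * y S * (hζ.toInteger - 1) * z S =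
      (hζ.toInteger - 1) ^ (3 * multiplicity S - 2) * (hζ.toInteger - 1) * (hζ.toInteger - 1) * x S * y S * z S by ring] at hh
    have := S.two_le_multiplicity
    rw [mul_comm _ ((hζ.toInteger - 1) ^ (3 * multiplicity S)), ← pow_succ, ← pow_succ,
      show 3 * multiplicity S - 2 + 1 + 1 = 3 * multiplicity S by lia, mul_assoc, mul_assoc,
      mul_assoc] at hh
    simp only [mul_eq_mul_left_iff, pow_eq_zero_iff', hζ.zeta_sub_one_prime'.ne_zero, ne_eq,
      mul_eq_zero, OfNat.ofNat_ne_zero, false_or, false_and, or_false] at hh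
    convert! hh using 1
    ring
  simp only [← x_spec, mul_assoc, ← y_spec, ← z_spec]
  rw [mul_comm 3, pow_mul, ← mul_pow, ← w_spec, ← S.H, a_cube_add_b_cube_eq_mul]
  ring

lemma exists_cube_associated :
    (∃ X, Associated (X ^ 3) S.x) ∧ (∃ Y, Associated (Y ^ 3) S.y) ∧
      ∃ Z, Associated (Z ^ 3) S.z := by
  have h₁ := S.isCoprime_x_z.mul_left S.isCoprime_y_z
  have h₂ : Associated (S.w ^ 3) (S.x * S.y * S.z) :=
    ⟨S.u, by rw [x_mul_y_mul_z_eq_u_mul_w_cube S, mul_comm]⟩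
  obtain ⟨T, h₃⟩ := exists_associated_pow_of_associated_pow_mul h₁ h₂
  exact ⟨exists_associated_pow_of_associated_pow_mul S.isCoprime_x_y h₃,
    exists_associated_pow_of_associated_pow_mul S.isCoprime_x_y.symm (mul_comm _ S.x ▸ h₃),
    exists_associated_pow_of_associated_pow_mul h₁.symm (mul_comm _ S.z ▸ h₂)⟩

/-- Given `S : Solution`, we let `S.u₁` and `S.X` be any elements such that
`S.X ^ 3 * S.u₁ = S.x` -/
noncomputable def X := (exists_cube_associated S).1.choose
noncomputable def u₁ := (exists_cube_associated S).1.choose_spec.choose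
lemma X_u₁_spec : S.X ^ 3 * S.u₁ = S.x :=
  (exists_cube_associated S).1.choose_spec.choose_spec

/-- Given `S : Solution`, we let `S.u₂` and `S.Y` be any elements such that
`S.Y ^ 3 * S.u₂ = S.y` -/
noncomputable def Y := (exists_cube_associated S).2.1.choose
noncomputable def u₂ := (exists_cube_associated S).2.1.choose_spec.choose
lemma Y_u₂_spec : S.Y ^ 3 * S.u₂ = S.y :=
  (exists_cube_associated S).2.1.choose_spec.choose_spec

/-- Given `S : Solution`, we let `S.u₃` and `S.Z` be any elements such that
`S.Z ^ 3 * S.u₃ = S.z` -/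
noncomputable def Z := (exists_cube_associated S).2.2.choose
noncomputable def u₃ := (exists_cube_associated S).2.2.choose_spec.choose
lemma Z_u₃_spec : S.Z ^ 3 * S.u₃ = S.z :=
  (exists_cube_associated S).2.2.choose_spec.choose_spec

lemma X_ne_zero : S.X ≠ 0 :=
  fun h ↦ lambda_not_dvd_x S <| by simp [← X_u₁_spec, h]

lemma lambda_not_dvd_X : ¬ (hζ.toInteger - 1) ∣ S.X :=
  fun h ↦ lambda_not_dvd_x S <| X_u₁_spec S ▸ dvd_mul_of_dvd_left (dvd_pow h (by decide)) _

lemma lambda_not_dvd_Y : ¬ (hζ.toInteger - 1) ∣ S.Y :=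
  fun h ↦ lambda_not_dvd_y S <| Y_u₂_spec S ▸ dvd_mul_of_dvd_left (dvd_pow h (by decide)) _

lemma lambda_not_dvd_Z : ¬ (hζ.toInteger - 1) ∣ S.Z :=
  fun h ↦ lambda_not_dvd_z S <| Z_u₃_spec S ▸ dvd_mul_of_dvd_left (dvd_pow h (by decide)) _

lemma isCoprime_Y_Z : IsCoprime S.Y S.Z := by
  rw [← IsCoprime.pow_iff (m := 3) (n := 3) (by decide) (by decide),
    ← isCoprime_mul_unit_right_left S.u₂.isUnit, ← isCoprime_mul_unit_right_right S.u₃.isUnit,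
    Y_u₂_spec, Z_u₃_spec]
  exact isCoprime_y_z S

-- This is just a computation and the formulas are too long.
set_option linter.style.whitespace false in
lemma formula1 : S.X^3*S.u₁*(hζ.toInteger - 1)^(3*S.multiplicity-2)+S.Y^3*S.u₂*(hζ.toInteger - 1)*(IsPrimitiveRoot.isUnit (hζ.toInteger_isPrimitiveRoot) (by decide)).unit+S.Z^3*S.u₃*(hζ.toInteger - 1)*(IsPrimitiveRoot.isUnit (hζ.toInteger_isPrimitiveRoot) (by decide)).unit^2 = 0 := by
  rw [X_u₁_spec, Y_u₂_spec, Z_u₃_spec, mul_comm S.x, ← x_spec, mul_comm S.y, ← y_spec, mul_comm S.z,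
    ← z_spec, eta_sq]
  calc _ = S.a+S.b+(IsPrimitiveRoot.isUnit (hζ.toInteger_isPrimitiveRoot) (by decide)).unit^2*S.b-S.a+(IsPrimitiveRoot.isUnit (hζ.toInteger_isPrimitiveRoot) (by decide)).unit^2*S.b+2*(IsPrimitiveRoot.isUnit (hζ.toInteger_isPrimitiveRoot) (by decide)).unit*S.b+S.b := by ring
  _ = 0 := by rw [eta_sq]; ring

/-- Let `u₄ := (IsPrimitiveRoot.isUnit (hζ.toInteger_isPrimitiveRoot) (by decide)).unit * S.u₃ * S.u₂⁻¹` -/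
noncomputable def u₄ := (IsPrimitiveRoot.isUnit (hζ.toInteger_isPrimitiveRoot) (by decide)).unit * S.u₃ * S.u₂⁻¹
lemma u₄_def : S.u₄ = (IsPrimitiveRoot.isUnit (hζ.toInteger_isPrimitiveRoot) (by decide)).unit * S.u₃ * S.u₂⁻¹ := rfl
/-- Let `u₅ := -(IsPrimitiveRoot.isUnit (hζ.toInteger_isPrimitiveRoot) (by decide)).unit ^ 2 * S.u₁ * S.u₂⁻¹` -/
noncomputable def u₅ := -(IsPrimitiveRoot.isUnit (hζ.toInteger_isPrimitiveRoot) (by decide)).unit ^ 2 * S.u₁ * S.u₂⁻¹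
lemma u₅_def : S.u₅ = -(IsPrimitiveRoot.isUnit (hζ.toInteger_isPrimitiveRoot) (by decide)).unit ^ 2 * S.u₁ * S.u₂⁻¹ := rfl

example (a b : 𝓞 K) (ha : a ≠ 0) (hb : b ≠ 0) : a * b ≠ 0 := by
  exact mul_ne_zero ha hb

-- This is just a computation and the formulas are too long.
set_option linter.style.whitespace false in
lemma formula2 :
    S.Y ^ 3 + S.u₄ * S.Z ^ 3 = S.u₅ * ((hζ.toInteger - 1) ^ (S.multiplicity - 1) * S.X) ^ 3 := by
  rw [u₅_def, neg_mul, neg_mul, Units.val_neg, neg_mul, eq_neg_iff_add_eq_zero, add_assoc,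
    add_comm (S.u₄ * S.Z ^ 3), ← add_assoc, add_comm (S.Y ^ 3)]
  apply mul_right_cancel₀ <| mul_ne_zero
    (mul_ne_zero hζ.zeta_sub_one_prime'.ne_zero S.u₂.isUnit.ne_zero) (Units.isUnit (IsPrimitiveRoot.isUnit (hζ.toInteger_isPrimitiveRoot) (by decide)).unit).ne_zero
  simp only [zero_mul, add_mul]
  rw [← formula1 S]
  congrm ?_ + ?_ + ?_
  · have : (S.multiplicity-1)*3+1 = 3*S.multiplicity-2 := by have := S.two_le_multiplicity; lia
    calc _ = S.X^3 *(S.u₂*S.u₂⁻¹)*((IsPrimitiveRoot.isUnit (hζ.toInteger_isPrimitiveRoot) (by decide)).unit^3*S.u₁)*((hζ.toInteger - 1)^((S.multiplicity-1)*3)*(hζ.toInteger - 1)) := by push_cast; ring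
    _ = S.X^3*S.u₁*(hζ.toInteger - 1)^(3*S.multiplicity-2) := by simp [hζ.toInteger_cube_eq_one, ← pow_succ, this]
  · ring
  · simp only [u₄_def, inv_eq_one_div, mul_div_assoc', mul_one, val_div_eq_divp, Units.val_mul,
      IsUnit.unit_spec, divp_mul_eq_mul_divp, divp_eq_iff_mul_eq]
    ring

-- This is just a computation and the formulas are too long.
set_option linter.style.whitespace false in
lemma lambda_sq_div_u₅_mul : (hζ.toInteger - 1) ^ 2 ∣ S.u₅ * ((hζ.toInteger - 1) ^ (S.multiplicity - 1) * S.X) ^ 3 := by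
  use (hζ.toInteger - 1)^(3*S.multiplicity-5)*S.u₅*(S.X^3)
  have : 3*(S.multiplicity-1) = 2+(3*S.multiplicity-5) := by have := S.two_le_multiplicity; lia
  calc _ = (hζ.toInteger - 1)^(3*(S.multiplicity-1))*S.u₅*S.X^3 := by ring
  _ = (hζ.toInteger - 1)^2*(hζ.toInteger - 1)^(3*S.multiplicity-5)*S.u₅*S.X^3 := by rw [this, pow_add]
  _ = (hζ.toInteger - 1)^2*((hζ.toInteger - 1)^(3*S.multiplicity-5)*S.u₅*S.X^3) := by ring

lemma u₄_eq_one_or_neg_one : S.u₄ = 1 ∨ S.u₄ = -1 := by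
  have : (hζ.toInteger - 1) ^ 2 ∣ (hζ.toInteger - 1) ^ 4 := ⟨(hζ.toInteger - 1) ^ 2, by ring⟩
  have h := S.lambda_sq_div_u₅_mul
  apply IsCyclotomicExtension.Rat.Three.eq_one_or_neg_one_of_unit_of_congruent hζ
  rcases h with ⟨X, hX⟩
  rcases lambda_pow_four_dvd_cube_sub_one_or_add_one_of_lambda_not_dvd hζ S.lambda_not_dvd_Y with
    HY | HY <;> rcases lambda_pow_four_dvd_cube_sub_one_or_add_one_of_lambda_not_dvd
      hζ S.lambda_not_dvd_Z with HZ | HZ <;> replace HY := this.trans HY <;> replace HZ :=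
      this.trans HZ <;> rcases HY with ⟨Y, hY⟩ <;> rcases HZ with ⟨Z, hZ⟩
  · refine ⟨-1, X - Y - S.u₄ * Z, ?_⟩
    rw [show (hζ.toInteger - 1) ^ 2 * (X - Y - S.u₄ * Z) = (hζ.toInteger - 1) ^ 2 * X - (hζ.toInteger - 1) ^ 2 * Y - S.u₄ * ((hζ.toInteger - 1) ^ 2 * Z) by ring,
      ← hX, ← hY, ← hZ, ← formula2]
    ring
  · refine ⟨1, -X + Y + S.u₄ * Z, ?_⟩
    rw [show (hζ.toInteger - 1) ^ 2 * (-X + Y + S.u₄ * Z) = -((hζ.toInteger - 1) ^ 2 * X - (hζ.toInteger - 1) ^ 2 * Y - S.u₄ * ((hζ.toInteger - 1) ^ 2 * Z)) by ring,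
      ← hX, ← hY, ← hZ, ← formula2]
    ring
  · refine ⟨1, X - Y - S.u₄ * Z, ?_⟩
    rw [show (hζ.toInteger - 1) ^ 2 * (X - Y - S.u₄ * Z) = (hζ.toInteger - 1) ^ 2 * X - (hζ.toInteger - 1) ^ 2 * Y - S.u₄ * ((hζ.toInteger - 1) ^ 2 * Z) by ring,
      ← hX, ← hY, ← hZ, ← formula2]
    ring
  · refine ⟨-1, -X + Y + S.u₄ * Z, ?_⟩
    rw [show (hζ.toInteger - 1) ^ 2 * (-X + Y + S.u₄ * Z) = -((hζ.toInteger - 1) ^ 2 * X - (hζ.toInteger - 1) ^ 2 * Y - S.u₄ * ((hζ.toInteger - 1) ^ 2 * Z)) by ring,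
      ← hX, ← hY, ← hZ, ← formula2]
    ring

lemma u₄_sq : S.u₄ ^ 2 = 1 := by
  rcases S.u₄_eq_one_or_neg_one with h | h <;> simp [h]

/-- Given `S : Solution`, we have that
`S.Y ^ 3 + (S.u₄ * S.Z) ^ 3 = S.u₅ * ((hζ.toInteger - 1) ^ (S.multiplicity - 1) * S.X) ^ 3`. -/
lemma formula3 :
    S.Y ^ 3 + (S.u₄ * S.Z) ^ 3 = S.u₅ * ((hζ.toInteger - 1) ^ (S.multiplicity - 1) * S.X) ^ 3 :=
  calc S.Y ^ 3 + (S.u₄ * S.Z) ^ 3 = S.Y ^ 3 + S.u₄ ^ 2 * S.u₄ * S.Z ^ 3 := by ring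
  _ = S.Y ^ 3 + S.u₄ * S.Z ^ 3 := by simp [← Units.val_pow_eq_pow_val, S.u₄_sq]
  _ = S.u₅ * ((hζ.toInteger - 1) ^ (S.multiplicity - 1) * S.X) ^ 3 := S.formula2

/-- Given `S : Solution`, we construct `S₁ : Solution'`, with smaller multiplicity of `(hζ.toInteger - 1)` in
  `c` (see `Solution'_descent_multiplicity_lt` below.). -/
noncomputable def Solution'_descent : Solution' hζ where
  a := S.Y
  b := S.u₄ * S.Z
  c := (hζ.toInteger - 1) ^ (S.multiplicity - 1) * S.X
  u := S.u₅
  ha := S.lambda_not_dvd_Y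
  hb := fun h ↦ S.lambda_not_dvd_Z <| Units.dvd_mul_left.1 h
  hc := fun h ↦ S.X_ne_zero <| by simpa [hζ.zeta_sub_one_prime'.ne_zero] using h
  coprime := (isCoprime_mul_unit_left_right S.u₄.isUnit _ _).2 S.isCoprime_Y_Z
  hcdvd := by
    refine dvd_mul_of_dvd_left (dvd_pow_self _ (fun h ↦ ?_)) _
    rw [Nat.sub_eq_iff_eq_add (le_trans (by simp) S.two_le_multiplicity), zero_add] at h
    simpa [h] using S.two_le_multiplicity
  H := formula3 S

/-- We have that `S.Solution'_descent.multiplicity = S.multiplicity - 1`. -/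
lemma Solution'_descent_multiplicity : S.Solution'_descent.multiplicity = S.multiplicity - 1 := by
  refine multiplicity_eq_of_dvd_of_not_dvd
    (by simp [Solution'_descent]) (fun h ↦ S.lambda_not_dvd_X ?_)
  obtain ⟨k, hk : (hζ.toInteger - 1) ^ (S.multiplicity - 1) * S.X = (hζ.toInteger - 1) ^ (S.multiplicity - 1 + 1) * k⟩ := h
  rw [pow_succ, mul_assoc] at hk
  simp only [mul_eq_mul_left_iff, pow_eq_zero_iff', hζ.zeta_sub_one_prime'.ne_zero, ne_eq,
    false_and, or_false] at hk
  simp [hk]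

/-- We have that `S.Solution'_descent.multiplicity < S.multiplicity`. -/
lemma Solution'_descent_multiplicity_lt :
    (Solution'_descent S).multiplicity < S.multiplicity := by
  rw [Solution'_descent_multiplicity S, Nat.sub_one]
  exact Nat.pred_lt <| by have := S.two_le_multiplicity; lia

/-- Given any `S : Solution`, there is another `S₁ : Solution` such that
  `S₁.multiplicity < S.multiplicity` -/
theorem exists_Solution_multiplicity_lt :
    ∃ S₁ : Solution hζ, S₁.multiplicity < S.multiplicity := by
  obtain ⟨S', hS'⟩ := exists_Solution_of_Solution' (Solution'_descent S)
  exact ⟨S', hS' ▸ Solution'_descent_multiplicity_lt S⟩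

end Solution

end FermatLastTheoremForThreeGen

end eisenstein

attribute [local instance] IsCyclotomicExtension.Rat.three_pid
attribute [local instance] UniqueFactorizationMonoid.normalizationMonoid

theorem my_flt3_gen {K : Type*} [Field K] [NumberField K] [IsCyclotomicExtension {3} ℚ K]
    {ζ : K} (hζ : IsPrimitiveRoot ζ 3) : FermatLastTheoremForThreeGen hζ := by
  classical
  intro a b c u hc ha hb hcdvd coprime H
  let S' : FermatLastTheoremForThreeGen.Solution' hζ :=
  { a := a, b := b, c := c, u := u, ha := ha, hb := hb, hc := hc,
    coprime := coprime, hcdvd := hcdvd, H := H }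
  obtain ⟨S, -⟩ := FermatLastTheoremForThreeGen.exists_Solution_of_Solution' S'
  obtain ⟨Smin, hSmin⟩ := S.exists_minimal
  obtain ⟨Sfin, hSfin⟩ := Smin.exists_Solution_multiplicity_lt
  linarith [hSmin Sfin]

section Aux

variable {K : Type*} [Field K] [NumberField K] [IsCyclotomicExtension {3} ℚ K]
  {ζ : K} (hζ : IsPrimitiveRoot ζ 3)

theorem my_eta_relation : hζ.toInteger ^ 2 + hζ.toInteger + 1 = 0 := by
  have h3 : hζ.toInteger ^ 3 = 1 := hζ.toInteger_cube_eq_one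
  have hne : hζ.toInteger - 1 ≠ 0 := hζ.zeta_sub_one_prime'.ne_zero
  have : (hζ.toInteger - 1) * (hζ.toInteger ^ 2 + hζ.toInteger + 1) = 0 := by
    linear_combination h3
  rcases mul_eq_zero.mp this with h | h
  · exact absurd h hne
  · exact h

theorem my_lambda_sq : (hζ.toInteger - 1) ^ 2 = -3 * hζ.toInteger := by
  linear_combination my_eta_relation hζ

theorem my_three_eq : (3 : 𝓞 K) = -(hζ.toInteger - 1) ^ 2 * hζ.toInteger ^ 2 := by
  have h3 : hζ.toInteger ^ 3 = 1 := hζ.toInteger_cube_eq_one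
  linear_combination hζ.toInteger ^ 2 * my_lambda_sq hζ - 3 * h3

theorem my_lambda_pow_not_dvd_one : ¬ (hζ.toInteger - 1) ^ 4 ∣ (1 : 𝓞 K) := fun h ↦
  hζ.zeta_sub_one_prime'.not_isUnit <| isUnit_of_dvd_one <| (dvd_pow_self _ four_ne_zero).trans h

theorem my_lambda_pow_not_dvd_three : ¬ (hζ.toInteger - 1) ^ 4 ∣ (3 : 𝓞 K) := by
  intro h
  rw [my_three_eq hζ] at h
  have hne : (hζ.toInteger - 1) ^ 2 ≠ 0 := pow_ne_zero _ hζ.zeta_sub_one_prime'.ne_zero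
  have h' : (hζ.toInteger - 1) ^ 2 * (hζ.toInteger - 1) ^ 2 ∣
      (hζ.toInteger - 1) ^ 2 * (-(hζ.toInteger ^ 2)) := by
    rw [← pow_add]
    convert h using 1
    ring
  replace h' := (mul_dvd_mul_iff_left hne).mp h'
  have hu : IsUnit (hζ.toInteger ^ 2) := by
    refine IsUnit.of_mul_eq_one hζ.toInteger ?_
    rw [← pow_succ]
    exact hζ.toInteger_cube_eq_one
  exact hζ.zeta_sub_one_prime'.not_isUnit <| isUnit_of_dvd_unit
    ((dvd_pow_self _ two_ne_zero).trans h') hu.neg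

include hζ in
/-- FLT3 for the ring of integers of the third cyclotomic field, coprime case. -/
theorem my_flt3_coprime (a b c : 𝓞 K) (ha : a ≠ 0) (hb : b ≠ 0) (hc : c ≠ 0)
    (hcop : IsCoprime a b) (H : a ^ 3 + b ^ 3 + c ^ 3 = 0) : False := by
  classical
  have hlam : Prime (hζ.toInteger - 1) := hζ.zeta_sub_one_prime'
  have hbc : IsCoprime b c := by
    refine isCoprime_of_prime_dvd (fun ⟨h1, _⟩ ↦ hb h1) (fun p hp hpb hpc ↦ ?_)
    have hpa : p ∣ a := by
      refine hp.dvd_of_dvd_pow (n := 3) ?_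
      have : a ^ 3 = -(b ^ 3) - c ^ 3 := by linear_combination H
      rw [this]
      exact dvd_sub (dvd_neg.mpr (hpb.pow three_ne_zero)) (hpc.pow three_ne_zero)
    exact hp.not_isUnit (hcop.isUnit_of_dvd' hpa hpb)
  have hac : IsCoprime a c := by
    refine isCoprime_of_prime_dvd (fun ⟨h1, _⟩ ↦ ha h1) (fun p hp hpa hpc ↦ ?_)
    have hpb : p ∣ b := by
      refine hp.dvd_of_dvd_pow (n := 3) ?_
      have : b ^ 3 = -(a ^ 3) - c ^ 3 := by linear_combination H
      rw [this]
      exact dvd_sub (dvd_neg.mpr (hpa.pow three_ne_zero)) (hpc.pow three_ne_zero)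
    exact hp.not_isUnit (hcop.isUnit_of_dvd' hpa hpb)
  have hu : ((-1 : (𝓞 K)ˣ) : 𝓞 K) = -1 := by simp
  by_cases hla : (hζ.toInteger - 1) ∣ a
  · have hlb : ¬ (hζ.toInteger - 1) ∣ b := fun h ↦ hlam.not_isUnit (hcop.isUnit_of_dvd' hla h)
    have hlc : ¬ (hζ.toInteger - 1) ∣ c := fun h ↦ hlam.not_isUnit (hac.isUnit_of_dvd' hla h)
    exact my_flt3_gen hζ b c a (-1) ha hlb hlc hla hbc (by rw [hu]; linear_combination H)
  · by_cases hlb : (hζ.toInteger - 1) ∣ b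
    · have hlc : ¬ (hζ.toInteger - 1) ∣ c := fun h ↦ hlam.not_isUnit (hbc.isUnit_of_dvd' hlb h)
      exact my_flt3_gen hζ a c b (-1) hb hla hlc hlb hac (by rw [hu]; linear_combination H)
    · by_cases hlc : (hζ.toInteger - 1) ∣ c
      · exact my_flt3_gen hζ a b c (-1) hc hla hlb hlc hcop (by rw [hu]; linear_combination H)
      · have Ea := lambda_pow_four_dvd_cube_sub_one_or_add_one_of_lambda_not_dvd hζ hla
        have Eb := lambda_pow_four_dvd_cube_sub_one_or_add_one_of_lambda_not_dvd hζ hlb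
        have Ec := lambda_pow_four_dvd_cube_sub_one_or_add_one_of_lambda_not_dvd hζ hlc
        have h1 := my_lambda_pow_not_dvd_one hζ
        have h3 := my_lambda_pow_not_dvd_three hζ
        rcases Ea with ha' | ha' <;> rcases Eb with hb' | hb' <;> rcases Ec with hc' | hc'
        · exact h3 (dvd_neg.mp (by
            convert dvd_add (dvd_add ha' hb') hc' using 1
            linear_combination -H))
        · exact h1 (dvd_neg.mp (by
            convert dvd_add (dvd_add ha' hb') hc' using 1
            linear_combination -H))
        · exact h1 (dvd_neg.mp (by
            convert dvd_add (dvd_add ha' hb') hc' using 1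
            linear_combination -H))
        · exact h1 (by
            convert dvd_add (dvd_add ha' hb') hc' using 1
            linear_combination -H)
        · exact h1 (dvd_neg.mp (by
            convert dvd_add (dvd_add ha' hb') hc' using 1
            linear_combination -H))
        · exact h1 (by
            convert dvd_add (dvd_add ha' hb') hc' using 1
            linear_combination -H)
        · exact h1 (by
            convert dvd_add (dvd_add ha' hb') hc' using 1
            linear_combination -H)
        · exact h3 (by
            convert dvd_add (dvd_add ha' hb') hc' using 1
            linear_combination -H)

include hζ in
/-- FLT3 for the ring of integers of the third cyclotomic field. -/
theorem my_flt3_OK (a b c : 𝓞 K) (ha : a ≠ 0) (hb : b ≠ 0) (hc : c ≠ 0) :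
    a ^ 3 + b ^ 3 + c ^ 3 ≠ 0 := by
  classical
  letI : GCDMonoid (𝓞 K) := UniqueFactorizationMonoid.toGCDMonoid _
  intro H
  obtain ⟨a', ha'⟩ := gcd_dvd_left a b
  obtain ⟨b', hb'⟩ := gcd_dvd_right a b
  set d := gcd a b with hd
  have hd0 : d ≠ 0 := fun h ↦ ha ((gcd_eq_zero_iff a b).mp h).1
  rw [ha', hb'] at H
  have hdc3 : d ^ 3 ∣ c ^ 3 := ⟨-(a' ^ 3 + b' ^ 3), by linear_combination H⟩
  have hdc : d ∣ c := by
    exact (IsIntegrallyClosed.pow_dvd_pow_iff (R := 𝓞 K) (n := 3) three_ne_zero).mp hdc3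
  obtain ⟨c', hc'⟩ := hdc
  rw [hc'] at H
  have ha0 : a' ≠ 0 := fun h ↦ ha (by rw [ha', h, mul_zero])
  have hb0 : b' ≠ 0 := fun h ↦ hb (by rw [hb', h, mul_zero])
  have hc0 : c' ≠ 0 := fun h ↦ hc (by rw [hc', h, mul_zero])
  have H' : a' ^ 3 + b' ^ 3 + c' ^ 3 = 0 := by
    have hd3 : d ^ 3 ≠ 0 := pow_ne_zero _ hd0
    refine mul_left_cancel₀ hd3 ?_
    rw [mul_zero]
    linear_combination H
  have hcop : IsCoprime a' b' := by
    refine isCoprime_of_prime_dvd (fun ⟨h1, _⟩ ↦ ha0 h1) (fun p hp hpa hpb ↦ ?_)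
    have hdvd : d * p ∣ d := by
      refine dvd_gcd ?_ ?_
      · rw [ha']; exact mul_dvd_mul_left d hpa
      · rw [hb']; exact mul_dvd_mul_left d hpb
    obtain ⟨k, hk⟩ := hdvd
    have h1 : (1 : 𝓞 K) = p * k := by
      refine mul_left_cancel₀ hd0 ?_
      rw [mul_one]
      conv_lhs => rw [hk]
      ring
    exact hp.not_isUnit (IsUnit.of_mul_eq_one _ h1.symm)
  exact my_flt3_coprime hζ a' b' c' ha0 hb0 hc0 hcop H'

end Aux

theorem kummer_flt3 (ω : ℂ) (hω : ω ^ 3 = 1) (hω1 : ω ≠ 1)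
    (x y z : Subring.closure ({ω} : Set ℂ))
    (hx : x ≠ 0) (hy : y ≠ 0) (hz : z ≠ 0) :
    x ^ 3 + y ^ 3 + z ^ 3 ≠ 0 := by
  intro H
  haveI : Fact (Nat.Prime 3) := ⟨by norm_num⟩
  have hord : orderOf ω = 3 := orderOf_eq_prime hω hω1
  have hprim : IsPrimitiveRoot ω 3 := hord ▸ IsPrimitiveRoot.orderOf ω
  set K := CyclotomicField 3 ℚ with hK
  haveI : NeZero ((3 : ℕ) : ℚ) := ⟨by norm_num⟩
  haveI : IsCyclotomicExtension {3} ℚ K := CyclotomicField.isCyclotomicExtension 3 ℚ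
  haveI : NumberField K := IsCyclotomicExtension.numberField {3} ℚ K
  have hζ := IsCyclotomicExtension.zeta_spec 3 ℚ K
  let g : K →+* ℂ := (IsAlgClosed.lift (R := ℚ) (S := K) (M := ℂ)).toRingHom
  have hginj : Function.Injective g := g.injective
  have hμ : IsPrimitiveRoot (g (IsCyclotomicExtension.zeta 3 ℚ K)) 3 :=
    hζ.map_of_injective hginj
  obtain ⟨i, -, hi⟩ := hμ.eq_pow_of_pow_eq_one hω
  let h : 𝓞 K →+* ℂ := g.comp (algebraMap (𝓞 K) K)
  have hinj : Function.Injective h := hginj.comp (RingOfIntegers.coe_injective (K := K))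
  have halg : algebraMap (𝓞 K) K hζ.toInteger = IsCyclotomicExtension.zeta 3 ℚ K := rfl
  have hωr : ω ∈ h.range := by
    refine ⟨hζ.toInteger ^ i, ?_⟩
    rw [← hi]
    simp only [h, RingHom.coe_comp, Function.comp_apply, map_pow, halg]
  have hle : Subring.closure ({ω} : Set ℂ) ≤ h.range :=
    Subring.closure_le.mpr (Set.singleton_subset_iff.mpr hωr)
  let e : 𝓞 K ≃+* h.range := RingEquiv.ofBijective h.rangeRestrict
    ⟨fun u v huv ↦ hinj (Subtype.ext_iff.mp huv), h.rangeRestrict_surjective⟩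
  let φ : Subring.closure ({ω} : Set ℂ) →+* 𝓞 K :=
    e.symm.toRingHom.comp (Subring.inclusion hle)
  have hφ : ∀ w : Subring.closure ({ω} : Set ℂ), h (φ w) = (w : ℂ) := by
    intro w
    have h2 : e (φ w) = Subring.inclusion hle w := e.apply_symm_apply _
    calc h (φ w) = (e (φ w) : ℂ) := rfl
    _ = ((Subring.inclusion hle w : h.range) : ℂ) := by rw [h2]
    _ = (w : ℂ) := rfl
  have hφinj : Function.Injective φ := fun u v huv ↦ by
    have : (u : ℂ) = (v : ℂ) := by rw [← hφ u, ← hφ v, huv]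
    exact Subtype.ext this
  refine my_flt3_OK hζ (φ x) (φ y) (φ z) ?_ ?_ ?_ ?_
  · exact fun h0 ↦ hx (hφinj (by rw [h0, map_zero]))
  · exact fun h0 ↦ hy (hφinj (by rw [h0, map_zero]))
  · exact fun h0 ↦ hz (hφinj (by rw [h0, map_zero]))
  · apply hinj
    rw [map_zero]
    have h3 : h (φ x ^ 3 + φ y ^ 3 + φ z ^ 3) =
        (x : ℂ) ^ 3 + (y : ℂ) ^ 3 + (z : ℂ) ^ 3 := by
      simp only [map_add, map_pow, hφ]
    rw [h3]
    have h4 := congrArg (Subtype.val : Subring.closure ({ω} : Set ℂ) → ℂ) H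
    push_cast at h4
    simpa using h4
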